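/- arXiv:1910.12226 — 2 statements merged into one kernel-verified Lean document; each statement's English description precedes it below -/
import Mathlib

section
/- Let n ∈ ℕ and λ, μ ∈ ℝ. If G_n : P_n → P_{n+1} is a patched Markov embedding such that the pullback of A_{n+1}^{λ,μ} by G_n equals A_n^{λ,μ}, then either λ = μ = 0 or G_n is a scalar patched Markov embedding (i.e. the weights a_i are all equal). -/
open Finset

noncomputable section

/-- `Psim n` is the space `P_n` of positive probability measures on
`Ω_{n+1} = {1,…,n+1}`, viewed as a subset of `ℝ^{n+1}`. -/
def Psim (n : ℕ) : Set (Fin (n + 1) → ℝ) :=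
  {p | (∀ i, p i ∈ Set.Ioo (0 : ℝ) 1) ∧ ∑ i, p i = 1}

/-- The tangent space of `P_n` (at any point): vectors in `ℝ^{n+1}` whose
coordinates sum to zero. -/
def Tang (n : ℕ) : Set (Fin (n + 1) → ℝ) :=
  {X | ∑ i, X i = 0}

/-- `B` is a symmetric bilinear form on `ℝ^{n+1}` (the value of a symmetric
`(0,2)`-tensor field at a point). -/
def IsSymmBilin {n : ℕ} (B : (Fin (n + 1) → ℝ) → (Fin (n + 1) → ℝ) → ℝ) : Prop :=
  (∀ X Y, B X Y = B Y X) ∧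
  (∀ (c : ℝ) (X X' Y : Fin (n + 1) → ℝ), B (c • X + X') Y = c * B X Y + B X' Y)

/-- `A` is a family of symmetric `(0,2)`-tensor fields `A_n` on `P_n`
(indices `n ≥ 1`, matching the paper's `ℕ = {1,2,…}`). -/
def SymmTF (A : (n : ℕ) → (Fin (n + 1) → ℝ) → (Fin (n + 1) → ℝ) → (Fin (n + 1) → ℝ) → ℝ) :
    Prop :=
  ∀ n : ℕ, 0 < n → ∀ p ∈ Psim n, IsSymmBilin (A n p)

/-- The scalar patched Markov embedding `G_n^{α,σ} : P_n → P_{n+1}`,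
`G_n^{α,σ}(p) = α ∑_{i ∈ Ω_{n+1}} p(i) δ_{σ(i)} + (1-α) δ_{σ(n+2)}`. -/
def sPatch (n : ℕ) (α : ℝ) (σ : Equiv.Perm (Fin (n + 2))) (p : Fin (n + 1) → ℝ) :
    Fin (n + 2) → ℝ := fun I =>
  α * ∑ i : Fin (n + 1), p i * (if σ i.castSucc = I then 1 else 0) +
    (1 - α) * (if σ (Fin.last (n + 1)) = I then 1 else 0)

/-- The differential of `G_n^{α,σ}`: `dG(X) = α ∑_i X^i δ_{σ(i)}`. -/
def sPatchD (n : ℕ) (α : ℝ) (σ : Equiv.Perm (Fin (n + 2))) (X : Fin (n + 1) → ℝ) :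
    Fin (n + 2) → ℝ := fun I =>
  α * ∑ i : Fin (n + 1), X i * (if σ i.castSucc = I then 1 else 0)

/-- A general patched Markov embedding `G_n : P_n → P_{n+1}` with weights `a_i`:
`G_n(p) = ∑_i p(i) (a_i δ_{σ(i)} + (1-a_i) δ_{σ(n+2)})`. -/
def patch (n : ℕ) (a : Fin (n + 1) → ℝ) (σ : Equiv.Perm (Fin (n + 2)))
    (p : Fin (n + 1) → ℝ) : Fin (n + 2) → ℝ := fun I =>
  ∑ i : Fin (n + 1), p i * (a i * (if σ i.castSucc = I then 1 else 0) +
    (1 - a i) * (if σ (Fin.last (n + 1)) = I then 1 else 0))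

/-- The differential of a patched Markov embedding. -/
def patchD (n : ℕ) (a : Fin (n + 1) → ℝ) (σ : Equiv.Perm (Fin (n + 2)))
    (X : Fin (n + 1) → ℝ) : Fin (n + 2) → ℝ := fun I =>
  ∑ i : Fin (n + 1), X i * (a i * (if σ i.castSucc = I then 1 else 0) +
    (1 - a i) * (if σ (Fin.last (n + 1)) = I then 1 else 0))

/-- Invariance of the family `{A_n}` under scalar patched Markov embeddings:
the pullback of `A_{n+1}` by each `G_n^{α,σ}` equals `A_n`. -/
def InvariantSP
    (A : (n : ℕ) → (Fin (n + 1) → ℝ) → (Fin (n + 1) → ℝ) → (Fin (n + 1) → ℝ) → ℝ) : Prop :=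
  ∀ n : ℕ, 0 < n → ∀ α ∈ Set.Ioo (0 : ℝ) 1, ∀ σ : Equiv.Perm (Fin (n + 2)),
    ∀ p ∈ Psim n, ∀ X ∈ Tang n, ∀ Y ∈ Tang n,
      A (n + 1) (sPatch n α σ p) (sPatchD n α σ X) (sPatchD n α σ Y) = A n p X Y

/-- The vector field `Z_i^n` on `P_n`, with (constant) coordinates
`e_i - (1/(n+1)) ∑_j e_j`. -/
def Zvec (n : ℕ) (i : Fin (n + 1)) : Fin (n + 1) → ℝ :=
  fun k => (if k = i then 1 else 0) - 1 / (n + 1)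

/-- The uniform probability measure `b_n ∈ P_n`. -/
def bunif (n : ℕ) : Fin (n + 1) → ℝ := fun _ => 1 / (n + 1)

/-- The point `p_u ∈ P_1`: `p_u(1) = u`, `p_u(2) = 1 - u`. -/
def pu (u : ℝ) : Fin 2 → ℝ := ![u, 1 - u]

/-- The tensor field `A_n^d(X,Y)_p = ∑_i X^i Y^i / p(i)²`. -/
def Ad (n : ℕ) (p X Y : Fin (n + 1) → ℝ) : ℝ := ∑ i, X i * Y i / (p i) ^ 2

/-- The tensor field `A_n^s(X,Y)_p = (∑_i X^i/p(i)) (∑_j Y^j/p(j))`. -/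
def As (n : ℕ) (p X Y : Fin (n + 1) → ℝ) : ℝ := (∑ i, X i / p i) * (∑ j, Y j / p j)

/-- The Fisher metric `g_n^F(X,Y)_p = ∑_i X^i Y^i / p(i)`. -/
def Fish (n : ℕ) (p X Y : Fin (n + 1) → ℝ) : ℝ := ∑ i, X i * Y i / p i

/-- The point `ψ_u^σ(α) = G_1^{α,σ}(p_u) ∈ P_2` (the indices `1,2,3` of `Ω_3`
are `0,1,2 : Fin 3`). -/
def psiPt (α u : ℝ) (σ : Equiv.Perm (Fin 3)) : Fin 3 → ℝ := sPatch 1 α σ (pu u)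

/-- `E^k ⊂ TP_2`: the line spanned by `Z_i^2 - Z_j^2 = e_i - e_j` where
`{i,j,k} = {0,1,2}`; equivalently, the sum-zero vectors vanishing at `k`. -/
def Esub (k : Fin 3) : Set (Fin 3 → ℝ) := {W | (∑ i, W i = 0) ∧ W k = 0}

/-- `u_α^{ij}` (formed with `σ = id`). -/
def uRatio (α u : ℝ) (i j : Fin 3) : ℝ :=
  psiPt α u (Equiv.refl (Fin 3)) i /
    (psiPt α u (Equiv.refl (Fin 3)) i + psiPt α u (Equiv.refl (Fin 3)) j)

/-- The image `dH^{ij}_q(Z_1^1) = ((q(i)+q(j))/2) (Z_i^2 - Z_j^2)` of `Z_1^1`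
under the differential of `H_q^{ij} : P_1 → P_2`. -/
def dHvec (q : Fin 3 → ℝ) (i j : Fin 3) : Fin 3 → ℝ :=
  ((q i + q j) / 2) • (Zvec 2 i - Zvec 2 j)

/-- Condition (C1) for `A_2`. -/
def CondC1 (A2 : (Fin 3 → ℝ) → (Fin 3 → ℝ) → (Fin 3 → ℝ) → ℝ) : Prop :=
  ∃ r : ℝ → ℝ, (∀ t : ℝ, 0 < t → 0 < r t) ∧ (∀ t : ℝ, 0 < t → r t * r (1 / t) = 1) ∧
    ∀ α ∈ Set.Ioo (0 : ℝ) 1, ∀ u ∈ Set.Ioo (0 : ℝ) 1, ∀ σ : Equiv.Perm (Fin 3),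
      ∀ W1 W2 W3 : Fin 3 → ℝ, W1 ∈ Esub (σ 0) → W2 ∈ Esub (σ 1) → W3 ∈ Esub (σ 2) →
        W3 = W1 + W2 →
        A2 (psiPt α u σ) W3 W1 = r (u / (1 - u)) * A2 (psiPt α u σ) W3 W2

/-- Condition (C2) for `A_1` and `A_2`: `A_1` is positive semidefinite and
degenerate at `b_1`, and the parallelism identity holds. -/
def CondC2 (A1 : (Fin 2 → ℝ) → (Fin 2 → ℝ) → (Fin 2 → ℝ) → ℝ)
    (A2 : (Fin 3 → ℝ) → (Fin 3 → ℝ) → (Fin 3 → ℝ) → ℝ) : Prop :=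
  (∀ p ∈ Psim 1, ∀ X ∈ Tang 1, 0 ≤ A1 p X X) ∧
  (∃ X ∈ Tang 1, X ≠ 0 ∧ ∀ Y ∈ Tang 1, A1 (bunif 1) X Y = 0) ∧
  (∀ α ∈ Set.Ioo (0 : ℝ) 1, ∀ u ∈ Set.Ioo (0 : ℝ) 1, ∀ σ : Equiv.Perm (Fin 3),
    ∀ i j k l : Fin 3, i ≠ j → k ≠ l →
      A2 (psiPt α u σ) (dHvec (psiPt α u σ) (σ i) (σ j)) (dHvec (psiPt α u σ) (σ k) (σ l)) =
        (Real.sign (2 * uRatio α u i j - 1) *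
            Real.sqrt (A1 (pu (uRatio α u i j)) (Zvec 1 0) (Zvec 1 0))) *
        (Real.sign (2 * uRatio α u k l - 1) *
            Real.sqrt (A1 (pu (uRatio α u k l)) (Zvec 1 0) (Zvec 1 0))))

/-- `H : P_m → P_n` (together with its linear differential `dH`) is a
composition of scalar patched Markov embeddings. -/
inductive IsSPMComp :
    (m n : ℕ) → ((Fin (m + 1) → ℝ) → (Fin (n + 1) → ℝ)) →
      ((Fin (m + 1) → ℝ) → (Fin (n + 1) → ℝ)) → Prop
  | refl (m : ℕ) : IsSPMComp m m id id
  | step {m n : ℕ} {H dH : (Fin (m + 1) → ℝ) → (Fin (n + 1) → ℝ)} (α : ℝ)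
      (hα : α ∈ Set.Ioo (0 : ℝ) 1) (σ : Equiv.Perm (Fin (n + 2)))
      (h : IsSPMComp m n H dH) :
      IsSPMComp m (n + 1) (fun p => sPatch n α σ (H p)) (fun X => sPatchD n α σ (dH X))

/-- `Q` is a Markov partition: each `Q i` is a probability measure on `Ω_{N+1}`
and the supports of the `Q i` are pairwise disjoint with union `Ω_{N+1}`. -/
def IsMarkovPartition {n N : ℕ} (Q : Fin (n + 1) → Fin (N + 1) → ℝ) : Prop :=
  (∀ i, (∀ I, 0 ≤ Q i I) ∧ ∑ I, Q i I = 1) ∧ (∀ I, ∃! i, Q i I ≠ 0)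

/-- The Markov embedding `F(p) = ∑_i p(i) Q_i` induced by `Q` (the same formula
gives its differential on tangent vectors). -/
def mEmb {n N : ℕ} (Q : Fin (n + 1) → Fin (N + 1) → ℝ) (p : Fin (n + 1) → ℝ) :
    Fin (N + 1) → ℝ := fun I => ∑ i, p i * Q i I

/-- `A_n^{λ,μ} = λ A_n^d + μ A_n^s`. -/
def Alm (n : ℕ) (lam mu : ℝ) (p X Y : Fin (n + 1) → ℝ) : ℝ :=
  lam * Ad n p X Y + mu * As n p X Y

/-!
Along `σ (n + 2)` the differential of a patched embedding contributes
`s = (∑ₖ (1 - aₖ) Xᵏ) / (∑ₖ (1 - aₖ) p(k))`, while on the other coordinates the weights `aₖ`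
cancel against those of `G(p)`; hence the pullback of `A_{n+1}^{λ,μ}` differs from `A_n^{λ,μ}`
on `(X, X)` by `((λ + μ) s + 2μ ∑ₖ Xᵏ / p(k)) s`. If `aᵢ ≠ aⱼ`, then `X = eᵢ - eⱼ` gives `s ≠ 0`;
at the uniform point `∑ₖ Xᵏ / p(k) = 0`, forcing `λ + μ = 0`, and at any point with
`p(i) ≠ p(j)` it is nonzero, forcing `μ = 0`.
-/

section PatchedEmbedding

variable {n : ℕ} (a : Fin (n + 1) → ℝ) (σ : Equiv.Perm (Fin (n + 2)))

lemma sum_perm_castSucc_last {M : Type*} [AddCommMonoid M] (f : Fin (n + 2) → M) :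
    ∑ I, f I = ∑ j : Fin (n + 1), f (σ j.castSucc) + f (σ (Fin.last (n + 1))) := by
  rw [← Equiv.sum_comp σ f, Fin.sum_univ_castSucc]

lemma patch_eq_patchD : patch n a σ = patchD n a σ := rfl

lemma patchD_apply_castSucc (X : Fin (n + 1) → ℝ) (j : Fin (n + 1)) :
    patchD n a σ X (σ j.castSucc) = a j * X j := by
  have hlast : Fin.last (n + 1) ≠ j.castSucc := (Fin.castSucc_lt_last j).ne'
  simp only [patchD, σ.injective.eq_iff, Fin.castSucc_inj, if_neg hlast, mul_zero, add_zero,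
    mul_ite, mul_one, Finset.sum_ite_eq', Finset.mem_univ, if_true]
  ring

lemma patchD_apply_last (X : Fin (n + 1) → ℝ) :
    patchD n a σ X (σ (Fin.last (n + 1))) = ∑ i, X i * (1 - a i) := by
  refine Finset.sum_congr rfl fun i _ => ?_
  have hi : σ i.castSucc ≠ σ (Fin.last (n + 1)) :=
    σ.injective.ne (Fin.castSucc_lt_last i).ne
  rw [if_neg hi, if_pos rfl]
  ring

variable {a}

lemma Ad_patch (ha : ∀ k, a k ≠ 0) (p X Y : Fin (n + 1) → ℝ) :
    Ad (n + 1) (patch n a σ p) (patchD n a σ X) (patchD n a σ Y) =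
      Ad n p X Y + (∑ k, X k * (1 - a k)) * (∑ k, Y k * (1 - a k)) /
        (∑ k, p k * (1 - a k)) ^ 2 := by
  rw [Ad, sum_perm_castSucc_last σ, patch_eq_patchD]
  simp only [patchD_apply_castSucc, patchD_apply_last]
  congr 1
  refine Finset.sum_congr rfl fun j _ => ?_
  rw [mul_mul_mul_comm, mul_pow, ← sq, mul_div_mul_left _ _ (pow_ne_zero 2 (ha j))]

lemma As_patch (ha : ∀ k, a k ≠ 0) (p X Y : Fin (n + 1) → ℝ) :
    As (n + 1) (patch n a σ p) (patchD n a σ X) (patchD n a σ Y) =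
      (∑ k, X k / p k + (∑ k, X k * (1 - a k)) / ∑ k, p k * (1 - a k)) *
        (∑ k, Y k / p k + (∑ k, Y k * (1 - a k)) / ∑ k, p k * (1 - a k)) := by
  rw [As, sum_perm_castSucc_last σ, sum_perm_castSucc_last σ, patch_eq_patchD]
  simp only [patchD_apply_castSucc, patchD_apply_last, mul_div_mul_left _ _ (ha _)]

lemma Alm_patch_self (ha : ∀ k, a k ≠ 0) (lam mu : ℝ) (p X : Fin (n + 1) → ℝ) :
    Alm (n + 1) lam mu (patch n a σ p) (patchD n a σ X) (patchD n a σ X) =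
      Alm n lam mu p X X +
        ((lam + mu) * ((∑ k, X k * (1 - a k)) / ∑ k, p k * (1 - a k)) +
            2 * mu * ∑ k, X k / p k) *
          ((∑ k, X k * (1 - a k)) / ∑ k, p k * (1 - a k)) := by
  rw [Alm, Alm, Ad_patch σ ha, As_patch σ ha, As]
  ring

end PatchedEmbedding

lemma sum_single_sub_single_mul {ι R : Type*} [Fintype ι] [DecidableEq ι] [CommRing R]
    (i j : ι) (f : ι → R) :
    ∑ k, (Pi.single i 1 - Pi.single j 1 : ι → R) k * f k = f i - f j := by
  simp [sub_mul, Finset.sum_sub_distrib, Pi.single_apply]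

section Pullback

variable {n : ℕ} {lam mu : ℝ} {a : Fin (n + 1) → ℝ} {σ : Equiv.Perm (Fin (n + 2))}

lemma mem_Psim_of_pos [Nontrivial (Fin (n + 1))] {p : Fin (n + 1) → ℝ}
    (hp : ∀ k, 0 < p k) (hsum : ∑ k, p k = 1) : p ∈ Psim n := by
  refine ⟨fun k => ⟨hp k, ?_⟩, hsum⟩
  obtain ⟨l, hl⟩ := exists_ne k
  exact hsum ▸ Finset.single_lt_sum hl (Finset.mem_univ k) (Finset.mem_univ l) (hp l)
    fun m _ _ => (hp m).le

lemma bunif_mem_Psim [Nontrivial (Fin (n + 1))] : bunif n ∈ Psim n :=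
  mem_Psim_of_pos (fun _ => by simp only [bunif]; positivity) (by simp [bunif]; field_simp)

lemma exists_mem_Psim_inv_sub_inv_ne_zero {i j : Fin (n + 1)} (hij : i ≠ j) :
    ∃ q ∈ Psim n, (q i)⁻¹ - (q j)⁻¹ ≠ 0 := by
  have : Nontrivial (Fin (n + 1)) := nontrivial_of_ne i j hij
  set q : Fin (n + 1) → ℝ := fun k => (bunif n k + (Pi.single i 1 : Fin (n + 1) → ℝ) k) / 2
  have hq : q ∈ Psim n :=
    mem_Psim_of_pos (fun k => by simp only [q, bunif, Pi.single_apply]; split_ifs <;> positivity)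
      (by simp [q, ← Finset.sum_div, Finset.sum_add_distrib, bunif_mem_Psim.2])
  have hqji : q j < q i := by
    simp only [q, bunif, Pi.single_apply, ↓reduceIte, if_neg hij.symm]
    linarith
  exact ⟨q, hq, sub_ne_zero.2 ((inv_lt_inv₀ (hq.1 i).1 (hq.1 j).1).2 hqji).ne⟩

lemma sum_mul_one_sub_pos (ha : ∀ i, a i ∈ Set.Ioo (0 : ℝ) 1) {p : Fin (n + 1) → ℝ}
    (hp : p ∈ Psim n) : 0 < ∑ k, p k * (1 - a k) :=
  Finset.sum_pos (fun k _ => mul_pos (hp.1 k).1 (sub_pos.2 (ha k).2)) Finset.univ_nonempty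

lemma identity_of_pullback_Alm_eq (ha : ∀ i, a i ∈ Set.Ioo (0 : ℝ) 1)
    (hpull : ∀ p ∈ Psim n, ∀ X ∈ Tang n, ∀ Y ∈ Tang n,
      Alm (n + 1) lam mu (patch n a σ p) (patchD n a σ X) (patchD n a σ Y) =
        Alm n lam mu p X Y)
    {i j : Fin (n + 1)} (hij : a i ≠ a j) {p : Fin (n + 1) → ℝ} (hp : p ∈ Psim n) :
    (lam + mu) * (a j - a i) + 2 * mu * ((p i)⁻¹ - (p j)⁻¹) * ∑ k, p k * (1 - a k) = 0 := by
  set X : Fin (n + 1) → ℝ := Pi.single i 1 - Pi.single j 1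
  have hX : X ∈ Tang n := by
    simp [X, Tang, Finset.sum_sub_distrib]
  have hc := (sum_mul_one_sub_pos ha hp).ne'
  have hS : ∑ k, X k * (1 - a k) = a j - a i := by
    rw [sum_single_sub_single_mul]; ring
  have hT : ∑ k, X k / p k = (p i)⁻¹ - (p j)⁻¹ := by
    simp only [div_eq_mul_inv]; exact sum_single_sub_single_mul i j _
  have h := hpull p hp X hX X hX
  rw [Alm_patch_self σ (fun k => (ha k).1.ne'), hS, hT, add_eq_left] at h
  have hs : (a j - a i) / ∑ k, p k * (1 - a k) ≠ 0 := div_ne_zero (sub_ne_zero.2 hij.symm) hc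
  calc (lam + mu) * (a j - a i) + 2 * mu * ((p i)⁻¹ - (p j)⁻¹) * ∑ k, p k * (1 - a k)
      = ((lam + mu) * ((a j - a i) / ∑ k, p k * (1 - a k)) + 2 * mu * ((p i)⁻¹ - (p j)⁻¹)) *
          ∑ k, p k * (1 - a k) := by field_simp
    _ = 0 := by rw [(mul_eq_zero.1 h).resolve_right hs, zero_mul]

end Pullback

theorem pullback_Alm_patch_scalar_general (n : ℕ) (lam mu : ℝ)
    (a : Fin (n + 1) → ℝ) (ha : ∀ i, a i ∈ Set.Ioo (0 : ℝ) 1)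
    (σ : Equiv.Perm (Fin (n + 2)))
    (hpull : ∀ p ∈ Psim n, ∀ X ∈ Tang n, ∀ Y ∈ Tang n,
      Alm (n + 1) lam mu (patch n a σ p) (patchD n a σ X) (patchD n a σ Y) =
        Alm n lam mu p X Y) :
    (lam = 0 ∧ mu = 0) ∨ (∀ i j : Fin (n + 1), a i = a j) := by
  refine or_iff_not_imp_right.2 fun hconst => ?_
  obtain ⟨i, j, hij⟩ : ∃ i j, a i ≠ a j := by simpa only [not_forall] using hconst
  have hne : i ≠ j := ne_of_apply_ne a hij
  have : Nontrivial (Fin (n + 1)) := nontrivial_of_ne i j hne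
  have hlm : lam + mu = 0 := by
    have h := identity_of_pullback_Alm_eq ha hpull hij bunif_mem_Psim
    simp only [bunif, sub_self, mul_zero, zero_mul, add_zero] at h
    exact (mul_eq_zero.1 h).resolve_right (sub_ne_zero.2 hij.symm)
  obtain ⟨q, hq, hqij⟩ := exists_mem_Psim_inv_sub_inv_ne_zero hne
  have h := identity_of_pullback_Alm_eq ha hpull hij hq
  rw [hlm, zero_mul, zero_add] at h
  have hmu : mu = 0 := by
    simpa [hqij, (sum_mul_one_sub_pos ha hq).ne'] using h
  exact ⟨by linarith, hmu⟩

/-- If the pullback of `A_{n+1}^{λ,μ}` by a patched Markov embedding `G_n`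
(with weights `a_i`) equals `A_n^{λ,μ}`, then either `λ = μ = 0` or the weights
`a_i` are all equal (i.e. `G_n` is a scalar patched Markov embedding). -/
theorem pullback_Alm_patch_scalar (n : ℕ) (hn : 0 < n) (lam mu : ℝ)
    (a : Fin (n + 1) → ℝ) (ha : ∀ i, a i ∈ Set.Ioo (0 : ℝ) 1)
    (σ : Equiv.Perm (Fin (n + 2)))
    (hpull : ∀ p ∈ Psim n, ∀ X ∈ Tang n, ∀ Y ∈ Tang n,
      Alm (n + 1) lam mu (patch n a σ p) (patchD n a σ X) (patchD n a σ Y) =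
        Alm n lam mu p X Y) :
    (lam = 0 ∧ mu = 0) ∨ (∀ i j : Fin (n + 1), a i = a j) :=
  pullback_Alm_patch_scalar_general n lam mu a ha σ hpull
end
end

section
/- For each n ∈ ℕ let A_n be a symmetric (0,2)-tensor field on P_n, and assume that for every n ∈ ℕ and each scalar patched Markov embedding G_n : P_n → P_{n+1}, the pullback of A_{n+1} by G_n equals A_n. Then for every tangent vector field Z on P_1 and every u ∈ (0,1), A_1(Z,Z)_{p_u} = A_1(Z,Z)_{p_{1−u}}. -/
open Finset

noncomputable section

/-! Invariance under the scalar patched embeddings `G^{α,σ}` and `G^{α,σ τ̃⁻¹}`, where `τ̃`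
extends a permutation `τ` of `Ω_{n+1}` by fixing `n+2`, makes each `A_n` invariant under
relabelling the points of `Ω_{n+1}`. On `Ω_2`, exchanging the two points sends `p_u` to
`p_{1-u}` and a tangent vector `Z` to `-Z`, and `A_1(-Z,-Z) = A_1(Z,Z)`. -/

namespace IsSymmBilin

variable {n : ℕ} {B : (Fin (n + 1) → ℝ) → (Fin (n + 1) → ℝ) → ℝ}

lemma apply_zero_left (h : IsSymmBilin B) (Y : Fin (n + 1) → ℝ) : B 0 Y = 0 := by
  have := h.2 (-1) 0 0 Y
  simp only [smul_zero, add_zero, neg_one_mul] at this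
  linarith

lemma apply_neg_left (h : IsSymmBilin B) (X Y : Fin (n + 1) → ℝ) : B (-X) Y = -B X Y := by
  simpa [h.apply_zero_left] using h.2 (-1) X 0 Y

lemma apply_neg_neg (h : IsSymmBilin B) (X : Fin (n + 1) → ℝ) : B (-X) (-X) = B X X := by
  rw [h.apply_neg_left, h.1, h.apply_neg_left, h.1, neg_neg]

end IsSymmBilin

lemma comp_perm_mem_Psim {n : ℕ} {p : Fin (n + 1) → ℝ} (hp : p ∈ Psim n)
    (τ : Equiv.Perm (Fin (n + 1))) : p ∘ τ ∈ Psim n :=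
  ⟨fun i => hp.1 (τ i), (Equiv.sum_comp τ p).trans hp.2⟩

lemma comp_perm_mem_Tang {n : ℕ} {X : Fin (n + 1) → ℝ} (hX : X ∈ Tang n)
    (τ : Equiv.Perm (Fin (n + 1))) : X ∘ τ ∈ Tang n :=
  (Equiv.sum_comp τ X).trans hX

section Relabel

variable {n : ℕ} (α : ℝ) (σ : Equiv.Perm (Fin (n + 2))) (τ : Equiv.Perm (Fin (n + 1)))

abbrev Equiv.Perm.extendLast : Equiv.Perm (Fin (n + 2)) :=
  τ.viaFintypeEmbedding Fin.castSuccEmb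

lemma Equiv.Perm.extendLast_castSucc (i : Fin (n + 1)) :
    τ.extendLast i.castSucc = (τ i).castSucc :=
  τ.viaFintypeEmbedding_apply_image Fin.castSuccEmb i

lemma Equiv.Perm.extendLast_last : τ.extendLast (Fin.last (n + 1)) = Fin.last (n + 1) :=
  τ.viaFintypeEmbedding_apply_notMem_range Fin.castSuccEmb (by simp)

lemma sPatchD_comp_perm (X : Fin (n + 1) → ℝ) :
    sPatchD n α σ (X ∘ τ) = sPatchD n α (σ * τ⁻¹.extendLast) X := by
  funext I
  simp only [sPatchD, Equiv.Perm.mul_apply, Equiv.Perm.extendLast_castSucc]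
  conv_rhs => rw [← Equiv.sum_comp τ]
  simp

lemma sPatch_comp_perm (p : Fin (n + 1) → ℝ) :
    sPatch n α σ (p ∘ τ) = sPatch n α (σ * τ⁻¹.extendLast) p := by
  funext I
  have hD := congrFun (sPatchD_comp_perm α σ τ p) I
  simp only [sPatchD] at hD
  simp only [sPatch, hD, Equiv.Perm.mul_apply, Equiv.Perm.extendLast_last]

end Relabel

lemma InvariantSP.apply_comp_perm
    {A : (n : ℕ) → (Fin (n + 1) → ℝ) → (Fin (n + 1) → ℝ) → (Fin (n + 1) → ℝ) → ℝ}
    (hinv : InvariantSP A) {n : ℕ} (hn : 0 < n) (τ : Equiv.Perm (Fin (n + 1)))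
    {p X Y : Fin (n + 1) → ℝ} (hp : p ∈ Psim n) (hX : X ∈ Tang n) (hY : Y ∈ Tang n) :
    A n (p ∘ τ) (X ∘ τ) (Y ∘ τ) = A n p X Y := by
  have hα : (1 / 2 : ℝ) ∈ Set.Ioo (0 : ℝ) 1 := by norm_num
  calc A n (p ∘ τ) (X ∘ τ) (Y ∘ τ)
      = A (n + 1) (sPatch n (1 / 2) 1 (p ∘ τ)) (sPatchD n (1 / 2) 1 (X ∘ τ))
          (sPatchD n (1 / 2) 1 (Y ∘ τ)) :=
        (hinv n hn _ hα 1 _ (comp_perm_mem_Psim hp τ) _ (comp_perm_mem_Tang hX τ) _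
          (comp_perm_mem_Tang hY τ)).symm
    _ = A n p X Y := by
        rw [sPatch_comp_perm, sPatchD_comp_perm, sPatchD_comp_perm]
        exact hinv n hn _ hα _ p hp X hX Y hY

lemma pu_mem_Psim {u : ℝ} (hu : u ∈ Set.Ioo (0 : ℝ) 1) : pu u ∈ Psim 1 := by
  obtain ⟨hu0, hu1⟩ := hu
  refine ⟨fun i => ?_, by simp [pu]⟩
  fin_cases i <;> simp [pu, hu0, hu1]

lemma pu_comp_swap (u : ℝ) : pu u ∘ Equiv.swap 0 1 = pu (1 - u) := by
  funext i
  fin_cases i <;> simp [pu]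

lemma comp_swap_eq_neg_of_mem_Tang {Z : Fin 2 → ℝ} (hZ : Z ∈ Tang 1) :
    Z ∘ Equiv.swap 0 1 = -Z := by
  have hsum : Z 0 + Z 1 = 0 := by simpa [Tang] using hZ
  funext i
  fin_cases i <;>
    simp only [Fin.zero_eta, Fin.mk_one, Function.comp_apply, Equiv.swap_apply_left,
      Equiv.swap_apply_right, Pi.neg_apply] <;>
    linarith

/-- For a family of symmetric `(0,2)`-tensor fields invariant under scalar
patched Markov embeddings: `A_1(Z,Z)_{p_u} = A_1(Z,Z)_{p_{1-u}}` for every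
tangent vector field `Z` on `P_1` and every `u ∈ (0,1)`. -/
theorem A1_symmetric_at_pu
    (A : (n : ℕ) → (Fin (n + 1) → ℝ) → (Fin (n + 1) → ℝ) → (Fin (n + 1) → ℝ) → ℝ)
    (hsymm : SymmTF A) (hinv : InvariantSP A) :
    ∀ Z ∈ Tang 1, ∀ u ∈ Set.Ioo (0 : ℝ) 1,
      A 1 (pu u) Z Z = A 1 (pu (1 - u)) Z Z := by
  intro Z hZ u hu
  have hpu := pu_mem_Psim hu
  have hpu' : pu (1 - u) ∈ Psim 1 := pu_comp_swap u ▸ comp_perm_mem_Psim hpu _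
  calc A 1 (pu u) Z Z
      = A 1 (pu u ∘ Equiv.swap 0 1) (Z ∘ Equiv.swap 0 1) (Z ∘ Equiv.swap 0 1) :=
        (hinv.apply_comp_perm one_pos _ hpu hZ hZ).symm
    _ = A 1 (pu (1 - u)) (-Z) (-Z) := by rw [pu_comp_swap, comp_swap_eq_neg_of_mem_Tang hZ]
    _ = A 1 (pu (1 - u)) Z Z := (hsymm 1 one_pos _ hpu').apply_neg_neg Z
end
end
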